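/- For 0 < a₁ < a₂ and t ≥ a₂, define δ(t) = ρ(a₂,t) − ρ(a₁,t), where ρ(a,t) = ∫_a^t sinh(2a)/(cosh τ · √(sinh²(2τ) − sinh²(2a))) dτ. Then δ is strictly increasing on (a₂, ∞); that is, δ'(t) = (1/cosh t)·(1/√((sinh 2t/sinh 2a₂)² − 1) − 1/√((sinh 2t/sinh 2a₁)² − 1)) > 0 for t > a₂. -/
import Mathlib


open Real MeasureTheory

noncomputable def rho (a t : ℝ) : ℝ :=
  ∫ τ in a..t, Real.sinh (2*a) /
    (Real.cosh τ * Real.sqrt (Real.sinh (2*τ)^2 - Real.sinh (2*a)^2))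

noncomputable def fInt (a τ : ℝ) : ℝ :=
  Real.sinh (2*a) / (Real.cosh τ * Real.sqrt (Real.sinh (2*τ)^2 - Real.sinh (2*a)^2))

lemma D_lower (a τ : ℝ) (ha : 0 < a) (h : a ≤ τ) :
    4 * Real.sinh (2*a) * Real.cosh (2*a) * (τ - a)
      ≤ Real.sinh (2*τ)^2 - Real.sinh (2*a)^2 := by
  have hs : Real.sinh (2*a) ≤ Real.sinh (2*τ) := Real.sinh_le_sinh.2 (by linarith)
  have hsa : 0 < Real.sinh (2*a) := Real.sinh_pos_iff.2 (by linarith)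
  have hexp : Real.sinh (2*τ) = Real.sinh (2*a) * Real.cosh (2*(τ-a))
      + Real.cosh (2*a) * Real.sinh (2*(τ-a)) := by
    rw [← Real.sinh_add]; ring_nf
  have h1 : (1:ℝ) ≤ Real.cosh (2*(τ-a)) := Real.one_le_cosh _
  have h2 : 2*(τ-a) ≤ Real.sinh (2*(τ-a)) := Real.self_le_sinh_iff.2 (by linarith)
  have hca : 0 < Real.cosh (2*a) := Real.cosh_pos _
  have hdiff : 2 * Real.cosh (2*a) * (τ - a) ≤ Real.sinh (2*τ) - Real.sinh (2*a) := by
    nlinarith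
  have hsum : 2 * Real.sinh (2*a) ≤ Real.sinh (2*τ) + Real.sinh (2*a) := by linarith
  have hmul := mul_le_mul hdiff hsum (by positivity) (by linarith)
  nlinarith [hmul]

lemma D_pos (a τ : ℝ) (ha : 0 < a) (h : a < τ) :
    0 < Real.sinh (2*τ)^2 - Real.sinh (2*a)^2 := by
  have hs : Real.sinh (2*a) < Real.sinh (2*τ) := Real.sinh_lt_sinh.2 (by linarith)
  have hsa : 0 < Real.sinh (2*a) := Real.sinh_pos_iff.2 (by linarith)
  nlinarith

lemma fInt_meas (a : ℝ) : Measurable (fInt a) := by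
  unfold fInt
  fun_prop

lemma fInt_integrable (a t : ℝ) (ha : 0 < a) (ht : a < t) :
    IntervalIntegrable (fInt a) volume a t := by
  set s : ℝ := Real.sinh (2*a) with hs
  have hsa : 0 < s := Real.sinh_pos_iff.2 (by linarith)
  have hca : 0 < Real.cosh (2*a) := Real.cosh_pos _
  set K : ℝ := s / (2 * Real.sqrt (s * Real.cosh (2*a))) with hKdef
  have hbase : IntervalIntegrable (fun x : ℝ => x ^ (-(1/2) : ℝ)) volume 0 (t - a) :=
    intervalIntegral.intervalIntegrable_rpow' (by norm_num)
  have hshift : IntervalIntegrable (fun x : ℝ => (x - a) ^ (-(1/2) : ℝ)) volume a t := by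
    have := hbase.comp_sub_right a
    simpa using this
  have hg : IntervalIntegrable (fun x : ℝ => K * (x - a) ^ (-(1/2) : ℝ)) volume a t :=
    hshift.const_mul K
  apply hg.mono_fun ((fInt_meas a).aestronglyMeasurable.restrict)
  rw [Filter.EventuallyLE, ae_restrict_iff' measurableSet_uIoc]
  filter_upwards with τ hτ
  rw [Set.uIoc_of_le ht.le] at hτ
  obtain ⟨hτ1, hτ2⟩ := hτ
  have hτa : 0 < τ - a := by linarith
  have hD : 0 < Real.sinh (2*τ)^2 - s^2 := D_pos a τ ha hτ1
  have hcosh : (1:ℝ) ≤ Real.cosh τ := Real.one_le_cosh τ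
  have hDl : 4 * s * Real.cosh (2*a) * (τ - a) ≤ Real.sinh (2*τ)^2 - s^2 :=
    D_lower a τ ha hτ1.le
  have hsqrtD : 2 * Real.sqrt (s * Real.cosh (2*a)) * Real.sqrt (τ - a)
      ≤ Real.sqrt (Real.sinh (2*τ)^2 - s^2) := by
    have h4 : Real.sqrt (4 * s * Real.cosh (2*a) * (τ - a))
        ≤ Real.sqrt (Real.sinh (2*τ)^2 - s^2) := Real.sqrt_le_sqrt hDl
    have : Real.sqrt (4 * s * Real.cosh (2*a) * (τ - a))
        = 2 * Real.sqrt (s * Real.cosh (2*a)) * Real.sqrt (τ - a) := by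
      rw [show 4 * s * Real.cosh (2*a) * (τ - a) = (2:ℝ)^2 * (s * Real.cosh (2*a)) * (τ - a) by ring,
        Real.sqrt_mul (by positivity), Real.sqrt_mul (by positivity), Real.sqrt_sq (by norm_num)]
    linarith [this ▸ h4]
  have hscpos : 0 < Real.sqrt (s * Real.cosh (2*a)) := Real.sqrt_pos.2 (by positivity)
  have hsta : 0 < Real.sqrt (τ - a) := Real.sqrt_pos.2 hτa
  have hfnn : 0 ≤ fInt a τ := by
    unfold fInt
    positivity
  have hrpow : (τ - a) ^ (-(1/2) : ℝ) = 1 / Real.sqrt (τ - a) := by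
    rw [Real.rpow_neg hτa.le, Real.sqrt_eq_rpow]; exact (one_div _).symm
  rw [Real.norm_of_nonneg hfnn, hrpow, hKdef, div_mul_div_comm, mul_one,
    Real.norm_of_nonneg (by positivity)]
  unfold fInt
  rw [div_le_div_iff₀ (mul_pos (Real.cosh_pos τ) (Real.sqrt_pos.2 hD))
    (by positivity)]
  have hkey : 2 * Real.sqrt (s * Real.cosh (2*a)) * Real.sqrt (τ - a)
      ≤ Real.cosh τ * Real.sqrt (Real.sinh (2*τ)^2 - s^2) := by
    calc 2 * Real.sqrt (s * Real.cosh (2*a)) * Real.sqrt (τ - a)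
        ≤ Real.sqrt (Real.sinh (2*τ)^2 - s^2) := hsqrtD
      _ ≤ Real.cosh τ * Real.sqrt (Real.sinh (2*τ)^2 - s^2) := by
          nlinarith [Real.sqrt_nonneg (Real.sinh (2*τ)^2 - s^2)]
  nlinarith [hsa.le, hkey, mul_pos hscpos hsta]

lemma fInt_contAt (a t : ℝ) (ha : 0 < a) (ht : a < t) : ContinuousAt (fInt a) t := by
  have hD : 0 < Real.sinh (2*t)^2 - Real.sinh (2*a)^2 := D_pos a t ha ht
  have hden : Real.cosh t * Real.sqrt (Real.sinh (2*t)^2 - Real.sinh (2*a)^2) ≠ 0 := by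
    have := Real.cosh_pos t
    have := Real.sqrt_pos.2 hD
    positivity
  unfold fInt
  exact ContinuousAt.div continuousAt_const
    ((Real.continuous_cosh.continuousAt).mul
      ((Real.continuous_sqrt.comp (by fun_prop : Continuous fun τ : ℝ =>
        Real.sinh (2*τ)^2 - Real.sinh (2*a)^2)).continuousAt)) hden

lemma rho_hasDeriv (a t : ℝ) (ha : 0 < a) (ht : a < t) :
    HasDerivAt (rho a) (fInt a t) t := by
  have h := intervalIntegral.integral_hasDerivAt_right (fInt_integrable a t ha ht)
    ⟨Set.univ, Filter.univ_mem, ((fInt_meas a).aestronglyMeasurable.restrict)⟩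
    (fInt_contAt a t ha ht)
  exact h

lemma fInt_eq (a t : ℝ) (ha : 0 < a) (ht : a < t) :
    fInt a t = (1 / Real.cosh t) *
      (1 / Real.sqrt ((Real.sinh (2*t) / Real.sinh (2*a))^2 - 1)) := by
  have hsa : 0 < Real.sinh (2*a) := Real.sinh_pos_iff.2 (by linarith)
  have hD : 0 < Real.sinh (2*t)^2 - Real.sinh (2*a)^2 := D_pos a t ha ht
  have h1 : (Real.sinh (2*t) / Real.sinh (2*a))^2 - 1
      = (Real.sinh (2*t)^2 - Real.sinh (2*a)^2) / Real.sinh (2*a)^2 := by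
    field_simp
  have hc : 0 < Real.cosh t := Real.cosh_pos _
  have hsqD : 0 < Real.sqrt (Real.sinh (2*t)^2 - Real.sinh (2*a)^2) := Real.sqrt_pos.2 hD
  have h2 : Real.sqrt ((Real.sinh (2*t) / Real.sinh (2*a))^2 - 1)
      = Real.sqrt (Real.sinh (2*t)^2 - Real.sinh (2*a)^2) / Real.sinh (2*a) := by
    rw [h1, Real.sqrt_div hD.le, Real.sqrt_sq hsa.le]
  rw [fInt, h2]
  field_simp

theorem delta_strict_mono (a₁ a₂ : ℝ) (h1 : 0 < a₁) (h12 : a₁ < a₂) :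
    StrictMonoOn (fun t => rho a₂ t - rho a₁ t) (Set.Ioi a₂) ∧
    ∀ t, a₂ < t →
      HasDerivAt (fun t => rho a₂ t - rho a₁ t)
        ((1 / Real.cosh t) *
          (1 / Real.sqrt ((Real.sinh (2*t) / Real.sinh (2*a₂))^2 - 1)
            - 1 / Real.sqrt ((Real.sinh (2*t) / Real.sinh (2*a₁))^2 - 1))) t ∧
      0 < (1 / Real.cosh t) *
          (1 / Real.sqrt ((Real.sinh (2*t) / Real.sinh (2*a₂))^2 - 1)
            - 1 / Real.sqrt ((Real.sinh (2*t) / Real.sinh (2*a₁))^2 - 1)) := by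
  have h2 : 0 < a₂ := h1.trans h12
  have key : ∀ t, a₂ < t →
      HasDerivAt (fun t => rho a₂ t - rho a₁ t)
        ((1 / Real.cosh t) *
          (1 / Real.sqrt ((Real.sinh (2*t) / Real.sinh (2*a₂))^2 - 1)
            - 1 / Real.sqrt ((Real.sinh (2*t) / Real.sinh (2*a₁))^2 - 1))) t := by
    intro t ht
    have h1t : a₁ < t := h12.trans ht
    have hd := (rho_hasDeriv a₂ t h2 ht).sub (rho_hasDeriv a₁ t h1 h1t)
    have heq : fInt a₂ t - fInt a₁ t = (1 / Real.cosh t) *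
          (1 / Real.sqrt ((Real.sinh (2*t) / Real.sinh (2*a₂))^2 - 1)
            - 1 / Real.sqrt ((Real.sinh (2*t) / Real.sinh (2*a₁))^2 - 1)) := by
      rw [fInt_eq a₂ t h2 ht, fInt_eq a₁ t h1 h1t]; ring
    rwa [heq] at hd
  have pos : ∀ t, a₂ < t →
      0 < (1 / Real.cosh t) *
          (1 / Real.sqrt ((Real.sinh (2*t) / Real.sinh (2*a₂))^2 - 1)
            - 1 / Real.sqrt ((Real.sinh (2*t) / Real.sinh (2*a₁))^2 - 1)) := by
    intro t ht
    have h1t : a₁ < t := h12.trans ht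
    have hs1 : 0 < Real.sinh (2*a₁) := Real.sinh_pos_iff.2 (by linarith)
    have hs2 : 0 < Real.sinh (2*a₂) := Real.sinh_pos_iff.2 (by linarith)
    have hs12 : Real.sinh (2*a₁) < Real.sinh (2*a₂) := Real.sinh_lt_sinh.2 (by linarith)
    have hst : Real.sinh (2*a₂) < Real.sinh (2*t) := Real.sinh_lt_sinh.2 (by linarith)
    have hA : 0 < (Real.sinh (2*t) / Real.sinh (2*a₂))^2 - 1 := by
      have : 1 < Real.sinh (2*t) / Real.sinh (2*a₂) := (one_lt_div hs2).2 hst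
      nlinarith
    have hAB : (Real.sinh (2*t) / Real.sinh (2*a₂))^2 - 1
        < (Real.sinh (2*t) / Real.sinh (2*a₁))^2 - 1 := by
      have hst' : 0 < Real.sinh (2*t) := hs2.trans hst
      have : Real.sinh (2*t) / Real.sinh (2*a₂) < Real.sinh (2*t) / Real.sinh (2*a₁) :=
        div_lt_div_of_pos_left hst' hs1 hs12
      have hpos : 0 < Real.sinh (2*t) / Real.sinh (2*a₂) := by positivity
      nlinarith
    have hsq : Real.sqrt ((Real.sinh (2*t) / Real.sinh (2*a₂))^2 - 1)
        < Real.sqrt ((Real.sinh (2*t) / Real.sinh (2*a₁))^2 - 1) :=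
      Real.sqrt_lt_sqrt hA.le hAB
    have hsqpos : 0 < Real.sqrt ((Real.sinh (2*t) / Real.sinh (2*a₂))^2 - 1) :=
      Real.sqrt_pos.2 hA
    have : 1 / Real.sqrt ((Real.sinh (2*t) / Real.sinh (2*a₁))^2 - 1)
        < 1 / Real.sqrt ((Real.sinh (2*t) / Real.sinh (2*a₂))^2 - 1) :=
      one_div_lt_one_div_of_lt hsqpos hsq
    have hc : 0 < Real.cosh t := Real.cosh_pos _
    have h10 : 0 < 1 / Real.cosh t := by positivity
    nlinarith
  refine ⟨?_, fun t ht => ⟨key t ht, pos t ht⟩⟩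
  exact strictMonoOn_of_deriv_pos (convex_Ioi a₂)
    (fun t ht => (key t ht).continuousAt.continuousWithinAt)
    (fun t ht => by
      rw [interior_Ioi] at ht
      rw [(key t ht).deriv]
      exact pos t ht)
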